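/- arXiv:2112.04175 — 5 statements merged into one kernel-verified Lean document; each statement's English description precedes it below -/
import Mathlib

section
/- The alternating group A₆ admits no faithful complex representation of dimension at most 4. -/
/-!
If `σ` is a complex representation of a finite group, with character `χ`, and `S` is a subgroup,
the average of `σ` over `S` is an idempotent whose trace is the dimension of the `S`-fixed space;
so `∑_{g ∈ S} χ g` lies in `|S| ℕ`, the fixed dimension can only drop when `S` grows, and it is the
full dimension only if `S` acts trivially. In `A₆` the classes of `(01)(23)`, `(012)` and
`(012)(345)` do not split (their centralisers in `S₆` contain odd permutations), so `χ` takes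
single values `a`, `b`, `c` on them. Applying this to `⟨(01)(23)⟩`, the Klein groups
`V₄ = ⟨(01)(23), (02)(13)⟩ ⊆ V₄ ⋊ ⟨(012)⟩` and `V₄' = ⟨(03)(14), (14)(25)⟩ ⊆ V₄' ⋊ ⟨(012)(345)⟩`,
the groups `⟨(012)⟩ ⋊ ⟨(01)(34)⟩` and `⟨(012)(345)⟩ ⋊ ⟨(01)(34)⟩` of order 6, and the Sylow
subgroup `⟨(012)⟩ × ⟨(345)⟩`, a faithful `χ` of degree `n ≤ 4` would need `n ∈ {3, 4}`,
`a = n - 4`, `b = c = n - 3`, and then the Sylow subgroup would give `9 ∣ n + 8 (n - 3)`.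
-/

open Finset Pointwise Matrix Equiv Perm

namespace Matrix

variable {ι K : Type*} [Fintype ι] [DecidableEq ι] [Field K] {P : Matrix ι ι K}

theorem _root_.IsIdempotentElem.toLin' (hP : IsIdempotentElem P) : IsIdempotentElem (toLin' P) :=
  hP.map toLinAlgEquiv'

theorem trace_eq_rank_of_isIdempotentElem (hP : IsIdempotentElem P) : P.trace = P.rank := by
  rw [← trace_toLin'_eq, (LinearMap.IsIdempotentElem.isProj_range _ hP.toLin').trace]
  rfl

theorem eq_one_of_isIdempotentElem_of_rank_eq [CharZero K] (hP : IsIdempotentElem P)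
    (hr : P.rank = Fintype.card ι) : P = 1 := by
  have h0 := LinearMap.IsIdempotentElem.eq_zero_of_trace_eq_zero hP.one_sub.toLin' (by
    rw [trace_toLin'_eq, trace_sub, trace_one, trace_eq_rank_of_isIdempotentElem hP, hr, sub_self])
  rw [map_eq_zero_iff _ toLin'.injective, sub_eq_zero] at h0
  exact h0.symm

end Matrix

namespace MonoidHom

section Semiring

variable {G M : Type*} [Group G] [DecidableEq G] [Semiring M] {σ : G →* M} {T : Finset G} {g : G}

theorem mul_sum_eq_sum (hT : T * T ⊆ T) (hg : g ∈ T) : σ g * ∑ h ∈ T, σ h = ∑ h ∈ T, σ h := by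
  have hgT : T.image (g * ·) = T :=
    eq_of_subset_of_card_le (image_subset_iff.2 fun _ hh => hT (mul_mem_mul hg hh))
      (card_image_of_injective _ (mul_right_injective g)).ge
  conv_rhs => rw [← hgT, sum_image fun _ _ _ _ => mul_left_cancel]
  simp [mul_sum]

theorem sum_mul_eq_sum (hT : T * T ⊆ T) (hg : g ∈ T) : (∑ h ∈ T, σ h) * σ g = ∑ h ∈ T, σ h := by
  have hgT : T.image (· * g) = T :=
    eq_of_subset_of_card_le (image_subset_iff.2 fun _ hh => hT (mul_mem_mul hh hg))
      (card_image_of_injective _ (mul_left_injective g)).ge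
  conv_rhs => rw [← hgT, sum_image fun _ _ _ _ => mul_right_cancel]
  simp [sum_mul]

end Semiring

variable {G ι K : Type*} [Group G] [DecidableEq G] [Fintype ι] [DecidableEq ι] [Field K]

noncomputable def average (σ : G →* Matrix ι ι K) (S : Finset G) : Matrix ι ι K :=
  (#S : K)⁻¹ • ∑ g ∈ S, σ g

variable [CharZero K] {σ : G →* Matrix ι ι K} {S T : Finset G} {g : G}

theorem average_mul_average_of_subset (hT : T * T ⊆ T) (hST : S ⊆ T) (hS : S.Nonempty) :
    σ.average S * σ.average T = σ.average T := by
  have hsum : (∑ g ∈ S, σ g) * ∑ h ∈ T, σ h = (#S : K) • ∑ h ∈ T, σ h := by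
    rw [sum_mul, sum_congr rfl fun g hg => mul_sum_eq_sum hT (hST hg), sum_const, Nat.cast_smul_eq_nsmul]
  rw [average, average, smul_mul_smul_comm, hsum, smul_smul, mul_right_comm,
    inv_mul_cancel₀ (Nat.cast_ne_zero.2 hS.card_pos.ne'), one_mul]

theorem average_mul_average_of_superset (hT : T * T ⊆ T) (hST : S ⊆ T) (hS : S.Nonempty) :
    σ.average T * σ.average S = σ.average T := by
  have hsum : (∑ h ∈ T, σ h) * ∑ g ∈ S, σ g = (#S : K) • ∑ h ∈ T, σ h := by
    rw [mul_sum, sum_congr rfl fun g hg => sum_mul_eq_sum hT (hST hg), sum_const, Nat.cast_smul_eq_nsmul]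
  rw [average, average, smul_mul_smul_comm, hsum, smul_smul, mul_assoc,
    inv_mul_cancel₀ (Nat.cast_ne_zero.2 hS.card_pos.ne'), mul_one]

theorem isIdempotentElem_average (hT : T * T ⊆ T) : IsIdempotentElem (σ.average T) := by
  rcases T.eq_empty_or_nonempty with rfl | hne
  · simp [IsIdempotentElem, average]
  · exact average_mul_average_of_subset hT subset_rfl hne

theorem sum_trace_eq_card_mul_rank (hT : T * T ⊆ T) :
    ∑ g ∈ T, (σ g).trace = #T * (σ.average T).rank := by
  rw [← trace_eq_rank_of_isIdempotentElem (isIdempotentElem_average hT), average, trace_smul,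
    trace_sum, smul_eq_mul, ← mul_assoc]
  rcases T.eq_empty_or_nonempty with rfl | hne
  · simp
  · rw [mul_inv_cancel₀ (Nat.cast_ne_zero.2 hne.card_pos.ne'), one_mul]

theorem rank_average_le_of_subset (hS : S * S ⊆ S) (hT : T * T ⊆ T) (hST : S ⊆ T)
    (hne : S.Nonempty) : (σ.average T).rank ≤ (σ.average S).rank := by
  have hdiff : IsIdempotentElem (σ.average S - σ.average T) := by
    rw [IsIdempotentElem, sub_mul, mul_sub, mul_sub, isIdempotentElem_average hS,
      isIdempotentElem_average hT, average_mul_average_of_subset hT hST hne,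
      average_mul_average_of_superset hT hST hne]
    abel
  have htrace := trace_eq_rank_of_isIdempotentElem hdiff
  rw [trace_sub, trace_eq_rank_of_isIdempotentElem (isIdempotentElem_average hS),
    trace_eq_rank_of_isIdempotentElem (isIdempotentElem_average hT), sub_eq_iff_eq_add] at htrace
  have : (σ.average S).rank = (σ.average S - σ.average T).rank + (σ.average T).rank := by
    exact_mod_cast htrace
  omega

theorem rank_average_lt_of_map_ne_one (hT : T * T ⊆ T) (hg : g ∈ T) (hσg : σ g ≠ 1) :
    (σ.average T).rank < Fintype.card ι := by
  refine (rank_le_card_width _).lt_of_ne fun hr => hσg ?_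
  have h1 := eq_one_of_isIdempotentElem_of_rank_eq (isIdempotentElem_average hT) hr
  rw [← mul_one (σ g), ← h1, average, mul_smul_comm, mul_sum_eq_sum hT hg, ← average, h1]

end MonoidHom

theorem Matrix.trace_map_eq_of_isConj {G R ι : Type*} [Group G] [CommSemiring R] [Fintype ι]
    [DecidableEq ι] (σ : G →* Matrix ι ι R) {g h : G} (hgh : IsConj g h) :
    (σ g).trace = (σ h).trace := by
  obtain ⟨c, rfl⟩ := isConj_iff.1 hgh
  rw [map_mul, map_mul, trace_mul_cycle, ← map_mul, inv_mul_cancel, map_one, one_mul]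

theorem alternatingGroup.isConj_of_not_centralizer_le {α : Type*} [Fintype α] [DecidableEq α]
    {g h : alternatingGroup α} (hgh : IsConj (g : Perm α) h)
    (hg : ¬ Subgroup.centralizer {(g : Perm α)} ≤ alternatingGroup α) : IsConj g h := by
  obtain ⟨c, hc⟩ := isConj_iff.1 hgh
  obtain ⟨d, hd, hdA⟩ := SetLike.not_le_iff_exists.1 hg
  have hdg : d * g * d⁻¹ = g := by
    rw [Subgroup.mem_centralizer_singleton_iff.1 hd, mul_inv_cancel_right]
  rcases Int.units_eq_one_or (sign c) with hc1 | hc1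
  · exact isConj_iff.2 ⟨⟨c, hc1⟩, Subtype.ext hc⟩
  · have hd1 : sign d = -1 := (Int.units_eq_one_or _).resolve_left hdA
    refine isConj_iff.2 ⟨⟨c * d, by simp [mem_alternatingGroup, hc1, hd1]⟩, Subtype.ext ?_⟩
    calc c * d * g * (c * d)⁻¹ = c * (d * g * d⁻¹) * c⁻¹ := by group
      _ = h := by rw [hdg, hc]

local notation "A₆" => alternatingGroup (Fin 6)

namespace A6

def nonsplitCycleTypes : Finset (Multiset ℕ) := {0, {2, 2}, {3}, {3, 3}}

theorem not_centralizer_le_alternatingGroup {g : Perm (Fin 6)}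
    (hg : g.cycleType ∈ nonsplitCycleTypes) :
    ¬ Subgroup.centralizer {g} ≤ alternatingGroup (Fin 6) := by
  rw [centralizer_le_alternating_iff]
  rintro ⟨hodd, hcard, hcount⟩
  have h3 := hcount 3
  generalize g.cycleType = m at *
  simp only [nonsplitCycleTypes, mem_insert, mem_singleton] at hg
  rcases hg with rfl | rfl | rfl | rfl <;> revert hodd hcard h3 <;> decide

theorem isConj_of_cycleType_eq {g h : A₆}
    (hgh : (g : Perm (Fin 6)).cycleType = (h : Perm (Fin 6)).cycleType)
    (hg : (g : Perm (Fin 6)).cycleType ∈ nonsplitCycleTypes) : IsConj g h :=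
  alternatingGroup.isConj_of_not_centralizer_le (isConj_iff_cycleType_eq.2 hgh)
    (not_centralizer_le_alternatingGroup hg)

def s01_23 : A₆ := ⟨c[0, 1] * c[2, 3], mem_alternatingGroup.mpr (by decide)⟩
def s02_13 : A₆ := ⟨c[0, 2] * c[1, 3], mem_alternatingGroup.mpr (by decide)⟩
def s03_14 : A₆ := ⟨c[0, 3] * c[1, 4], mem_alternatingGroup.mpr (by decide)⟩
def s14_25 : A₆ := ⟨c[1, 4] * c[2, 5], mem_alternatingGroup.mpr (by decide)⟩
def s01_34 : A₆ := ⟨c[0, 1] * c[3, 4], mem_alternatingGroup.mpr (by decide)⟩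
def c012 : A₆ := ⟨c[0, 1, 2], mem_alternatingGroup.mpr (by decide)⟩
def c345 : A₆ := ⟨c[3, 4, 5], mem_alternatingGroup.mpr (by decide)⟩

def cycleTypeRep (m : Multiset ℕ) : A₆ :=
  if m = {2, 2} then s01_23 else if m = {3} then c012 else if m = {3, 3} then c012 * c345 else 1

theorem sum_trace_eq_of_map_cycleType {n : ℕ} (σ : A₆ →* Matrix (Fin n) (Fin n) ℂ) {S : Finset A₆}
    {p q r : ℕ} (hS : S.val.map (fun g : A₆ => (g : Perm (Fin 6)).cycleType) =
      {0} + p • {{2, 2}} + q • {{3}} + r • {{3, 3}}) :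
    ∑ g ∈ S, (σ g).trace =
      n + p * (σ s01_23).trace + q * (σ c012).trace + r * (σ (c012 * c345)).trace := by
  have hrep : ∀ m ∈ nonsplitCycleTypes, ((cycleTypeRep m : A₆) : Perm (Fin 6)).cycleType = m := by
    decide +kernel
  have hconj : ∀ g ∈ S, (σ g).trace = (σ (cycleTypeRep (g : Perm (Fin 6)).cycleType)).trace := by
    intro g hg
    have hm : (g : Perm (Fin 6)).cycleType ∈ nonsplitCycleTypes := by
      have := hS ▸ Multiset.mem_map_of_mem (fun g : A₆ => (g : Perm (Fin 6)).cycleType) hg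
      simp only [Multiset.mem_add, Multiset.mem_nsmul, Multiset.mem_singleton] at this
      simp only [nonsplitCycleTypes, mem_insert, mem_singleton]
      tauto
    exact trace_map_eq_of_isConj σ (isConj_of_cycleType_eq (hrep _ hm).symm hm)
  have hsum : ∑ g ∈ S, (σ g).trace =
      ((S.val.map fun g : A₆ => (g : Perm (Fin 6)).cycleType).map
        fun m => (σ (cycleTypeRep m)).trace).sum := by
    rw [Multiset.map_map, Function.comp_def, ← sum_eq_multiset_sum]
    exact sum_congr rfl hconj
  rw [hsum, hS]
  have h0 : cycleTypeRep 0 = 1 := by decide +kernel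
  have h22 : cycleTypeRep {2, 2} = s01_23 := by decide +kernel
  have h3 : cycleTypeRep {3} = c012 := by decide +kernel
  have h33 : cycleTypeRep {3, 3} = c012 * c345 := by decide +kernel
  simp only [Multiset.map_add, Multiset.map_nsmul, Multiset.map_singleton, Multiset.sum_add,
    Multiset.sum_nsmul, Multiset.sum_singleton, h0, h22, h3, h33, map_one, trace_one,
    Fintype.card_fin, nsmul_eq_mul]

theorem card_mul_rank_average_eq {n : ℕ} (σ : A₆ →* Matrix (Fin n) (Fin n) ℂ) (S : Finset A₆)
    (p q r : ℕ) (hSS : S * S ⊆ S) (hS : S.val.map (fun g : A₆ => (g : Perm (Fin 6)).cycleType) =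
      {0} + p • {{2, 2}} + q • {{3}} + r • {{3, 3}}) :
    ((1 + p + q + r : ℕ) : ℂ) * (σ.average S).rank =
      n + p * (σ s01_23).trace + q * (σ c012).trace + r * (σ (c012 * c345)).trace := by
  have hcard : #S = 1 + p + q + r := by
    rw [card_def, ← Multiset.card_map (fun g : A₆ => (g : Perm (Fin 6)).cycleType), hS]
    simp only [Multiset.card_add, Multiset.card_nsmul, Multiset.card_singleton]
    ring
  rw [← hcard, ← MonoidHom.sum_trace_eq_card_mul_rank hSS, sum_trace_eq_of_map_cycleType σ hS]

def V₄ : Finset A₆ := {1, s01_23, s02_13, s01_23 * s02_13}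
def V₄' : Finset A₆ := {1, s03_14, s14_25, s03_14 * s14_25}
def C₂ (g : A₆) : Finset A₆ := {1, g}
def C₃ (g : A₆) : Finset A₆ := {1, g, g ^ 2}

theorem four_lt_of_rank_relations {n kT kV kA kD kV' kA' kD' kP : ℕ} {a b c : ℂ}
    (hT : 2 * (kT : ℂ) = n + a) (hV : 4 * (kV : ℂ) = n + 3 * a)
    (hA : 12 * (kA : ℂ) = n + 3 * a + 8 * b) (hD : 6 * (kD : ℂ) = n + 3 * a + 2 * b)
    (hV' : 4 * (kV' : ℂ) = n + 3 * a) (hA' : 12 * (kA' : ℂ) = n + 3 * a + 8 * c)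
    (hD' : 6 * (kD' : ℂ) = n + 3 * a + 2 * c) (hP : 9 * (kP : ℂ) = n + 4 * b + 4 * c)
    (hTn : kT < n) (hAV : kA ≤ kV) (hA'V' : kA' ≤ kV') : 4 < n := by
  have e₁ : (2 * kV + n : ℂ) = 3 * kT := by linear_combination hV / 2 - 3 * hT / 2
  have e₂ : (2 * kD : ℂ) = kV + kA := by linear_combination hD / 3 - hA / 12 - hV / 4
  have e₃ : (2 * kD' : ℂ) = kV' + kA' := by linear_combination hD' / 3 - hA' / 12 - hV' / 4
  have e₄ : (kV' : ℂ) = kV := by linear_combination hV' / 4 - hV / 4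
  have e₅ : (9 * kP + 2 * kV + 2 * kV' : ℂ) = n + 6 * kA + 6 * kA' := by
    linear_combination hP - (hA - hV) / 2 - (hA' - hV') / 2
  norm_cast at e₁ e₂ e₃ e₄ e₅
  by_contra! hn
  interval_cases n <;> omega

end A6

open A6

/-- `A₆` admits no faithful complex representation of dimension at most 4. -/
theorem A6_no_faithful_rep_dim_le_four (n : ℕ) (hn : n ≤ 4)
    (ρ : alternatingGroup (Fin 6) →* GL (Fin n) ℂ) :
    ¬ Function.Injective ρ := by
  intro hρ
  set σ : A₆ →* Matrix (Fin n) (Fin n) ℂ := (Units.coeHom _).comp ρ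
  have hT := card_mul_rank_average_eq σ (C₂ s01_23) 1 0 0 (by decide +kernel) (by decide +kernel)
  have hV := card_mul_rank_average_eq σ V₄ 3 0 0 (by decide +kernel) (by decide +kernel)
  have hA := card_mul_rank_average_eq σ (V₄ * C₃ c012) 3 8 0 (by decide +kernel) (by decide +kernel)
  have hD := card_mul_rank_average_eq σ (C₃ c012 * C₂ s01_34) 3 2 0 (by decide +kernel)
    (by decide +kernel)
  have hV' := card_mul_rank_average_eq σ V₄' 3 0 0 (by decide +kernel) (by decide +kernel)
  have hA' := card_mul_rank_average_eq σ (V₄' * C₃ (c012 * c345)) 3 0 8 (by decide +kernel)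
    (by decide +kernel)
  have hD' := card_mul_rank_average_eq σ (C₃ (c012 * c345) * C₂ s01_34) 3 0 2 (by decide +kernel)
    (by decide +kernel)
  have hP := card_mul_rank_average_eq σ (C₃ c012 * C₃ c345) 0 4 4 (by decide +kernel)
    (by decide +kernel)
  norm_num at hT hV hA hD hV' hA' hD' hP
  have hTn : (σ.average (C₂ s01_23)).rank < n := by
    simpa using MonoidHom.rank_average_lt_of_map_ne_one (σ := σ) (by decide +kernel)
      (by decide +kernel : s01_23 ∈ C₂ s01_23)
      fun h => absurd (hρ ((Units.ext h).trans (map_one ρ).symm)) (by decide +kernel)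
  have hAV := MonoidHom.rank_average_le_of_subset (σ := σ) (T := V₄ * C₃ c012)
    (by decide +kernel) (by decide +kernel) (subset_mul_left V₄ (by decide +kernel))
    ⟨1, by decide +kernel⟩
  have hAV' := MonoidHom.rank_average_le_of_subset (σ := σ) (T := V₄' * C₃ (c012 * c345))
    (by decide +kernel) (by decide +kernel) (subset_mul_left V₄' (by decide +kernel))
    ⟨1, by decide +kernel⟩
  exact hn.not_gt (four_lt_of_rank_relations hT hV hA hD hV' hA' hD' hP hTn hAV hAV')
end

section
/- If S₆ acts transitively on a set Ω with |Ω| ≤ 16, then |Ω| ∈ {1, 2, 6, 12, 10, 15}. -/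
/-!
The stabilizer `H` of a point has index `|Ω|`, a divisor of `720` that is at most `16`, so only
the indices `3, 4, 5, 8, 9, 16` have to be excluded. For index `n < 6` the normal core of `H` has
index dividing `n! < 6!`, so it is a nontrivial normal subgroup of `S₆` and contains `A₆`, forcing
`n ≤ 2`. For the others, `A₆ ⊓ H` has index `8, 16` or `18`, i.e. order `90, 45` or `40`.
A subgroup of order `5` of `S₆` is generated by a `5`-cycle whose centralizer has order `5`, so
its normalizer has order dividing `5 * 4 = 20`. Hence in a subgroup `K` the number of Sylow
`5`-subgroups is `|K| / d` with `d ∣ 20`, and for these three orders it is never `≡ 1 [MOD 5]`.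
-/

open Equiv Equiv.Perm Subgroup Nat MulAction

namespace Subgroup

variable {G : Type*} [Group G]

theorem index_normalCore_dvd_factorial (H : Subgroup G) [H.FiniteIndex] :
    H.normalCore.index ∣ H.index ! := by
  rw [normalCore_eq_ker, index_ker, index_eq_card, ← Nat.card_perm]
  exact card_subgroup_dvd_card _

theorem card_subgroupOf_dvd (H K : Subgroup G) : Nat.card (H.subgroupOf K) ∣ Nat.card H := by
  rw [← card_map_of_injective K.subtype_injective, subgroupOf_map_subtype]
  exact card_dvd_of_le inf_le_left

theorem card_normalizer_dvd (H : Subgroup G) :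
    Nat.card (normalizer (H : Set G)) ∣
      Nat.card (centralizer (H : Set G)) * Nat.card (MulAut H) := by
  rw [← card_mul_index H.normalizerMonoidHom.ker, index_ker, normalizerMonoidHom_ker]
  exact mul_dvd_mul (card_subgroupOf_dvd _ _) (card_subgroup_dvd_card _)

theorem card_normalizer_dvd_map {G' : Type*} [Group G'] (H : Subgroup G) {f : G →* G'}
    (hf : Function.Injective f) :
    Nat.card (normalizer (H : Set G)) ∣ Nat.card (normalizer (H.map f : Set G')) := by
  rw [← card_map_of_injective hf]
  exact card_dvd_of_le (le_normalizer_map f)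

end Subgroup

namespace Equiv.Perm

variable {α : Type*} [Fintype α] [DecidableEq α]

theorem index_le_two_of_index_lt_card (hα : 5 ≤ Nat.card α) {H : Subgroup (Perm α)}
    (hH : H.index < Nat.card α) : H.index ≤ 2 := by
  have hcore_ne_bot : H.normalCore ≠ ⊥ := by
    intro hbot
    have hdvd : (Nat.card α)! ∣ H.index ! := by
      rw [← Nat.card_perm, ← index_bot, ← hbot]
      exact index_normalCore_dvd_factorial H
    have hlt : H.index ! < (Nat.card α)! :=
      (factorial_lt (Nat.pos_of_ne_zero H.index_ne_zero_of_finite)).2 hH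
    exact absurd (Nat.le_of_dvd (factorial_pos _) hdvd) (not_le.2 hlt)
  have hA : alternatingGroup α ≤ H :=
    (alternatingGroup_le_of_normal hα ((nontrivial_iff_ne_bot _).2 hcore_ne_bot)).trans
      H.normalCore_le
  have : Nontrivial α := Finite.one_lt_card_iff_nontrivial.mp (by omega)
  exact Nat.le_of_dvd two_pos (alternatingGroup.index_eq_two (α := α) ▸ index_dvd_of_le hA)

theorem card_centralizer_of_prime_orderOf {σ : Perm α} {p : ℕ} (hp : p.Prime)
    (hσ : orderOf σ = p) (hα : Fintype.card α < 2 * p) :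
    Nat.card (centralizer {σ}) = (Fintype.card α - p)! * p := by
  have hcycle : σ.IsCycle := isCycle_of_prime_order' (hσ ▸ hp) (hσ ▸ hα)
  have hct : σ.cycleType = {p} := by rw [hcycle.cycleType, ← hcycle.orderOf, hσ]
  rw [nat_card_centralizer, hct]
  simp

theorem card_normalizer_dvd_of_card_prime {P : Subgroup (Perm α)} {p : ℕ} (hp : p.Prime)
    (hP : Nat.card P = p) (hα : Fintype.card α < 2 * p) :
    Nat.card (normalizer (P : Set (Perm α))) ∣ (Fintype.card α - p)! * p * (p - 1) := by
  have := Fact.mk hp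
  have : IsCyclic P := isCyclic_of_prime_card hP
  obtain ⟨σ, hσ⟩ := exists_prime_orderOf_dvd_card' (G := P) p hP.symm.dvd
  calc Nat.card (normalizer (P : Set (Perm α)))
      ∣ Nat.card (centralizer (P : Set (Perm α))) * Nat.card (MulAut P) := card_normalizer_dvd P
    _ ∣ Nat.card (centralizer {(σ : Perm α)}) * (p - 1) := by
      rw [IsCyclic.card_mulAut, hP, totient_prime hp]
      exact mul_dvd_mul_right (card_dvd_of_le (centralizer_le (by simp))) _
    _ = (Fintype.card α - p)! * p * (p - 1) := by
      rw [card_centralizer_of_prime_orderOf hp ((orderOf_coe σ).trans hσ) hα]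

-- `d` is the order of the normalizer in `K` of a Sylow `p`-subgroup, `m` the number of those.
theorem exists_mul_eq_card_modEq_one {p : ℕ} [hp : Fact p.Prime] (K : Subgroup (Perm α))
    (hα : Fintype.card α < 2 * p)
    (hpK : p ∣ Nat.card K) (hp2K : ¬ p ^ 2 ∣ Nat.card K) :
    ∃ d m, d ∣ (Fintype.card α - p)! * p * (p - 1) ∧ m ≡ 1 [MOD p] ∧ d * m = Nat.card K := by
  obtain ⟨Q⟩ : Nonempty (Sylow p K) := Sylow.nonempty
  have hQ : Nat.card (Q.map K.subtype) = p := by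
    rw [card_map_of_injective K.subtype_injective, Q.card_eq_multiplicity]
    have hK0 : Nat.card K ≠ 0 := Nat.card_pos.ne'
    have h1 : 1 ≤ (Nat.card K).factorization p :=
      (hp.out.pow_dvd_iff_le_factorization hK0).1 (by simpa using hpK)
    have h2 : ¬ 2 ≤ (Nat.card K).factorization p :=
      fun h ↦ hp2K ((hp.out.pow_dvd_iff_le_factorization hK0).2 h)
    rw [show (Nat.card K).factorization p = 1 by omega, pow_one]
  refine ⟨_, _, (card_normalizer_dvd_map (Q : Subgroup K) K.subtype_injective).trans
    (card_normalizer_dvd_of_card_prime hp.out hQ hα), card_sylow_modEq_one p K, ?_⟩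
  rw [Q.card_eq_index_normalizer]
  exact card_mul_index _

theorem index_subgroup_fin_six_notMem (K : Subgroup (Perm (Fin 6))) :
    K.index ∉ ({8, 16, 18} : Set ℕ) := by
  intro hK
  have hmul : Nat.card K * K.index = 720 := by
    rw [card_mul_index, Nat.card_perm, Nat.card_eq_fintype_card, Fintype.card_fin]; rfl
  have : Fact (Nat.Prime 5) := ⟨by norm_num⟩
  simp only [Set.mem_insert_iff, Set.mem_singleton_iff] at hK
  have hcard : Nat.card K = 90 ∨ Nat.card K = 45 ∨ Nat.card K = 40 := by
    rcases hK with hK | hK | hK <;> rw [hK] at hmul <;> omega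
  obtain ⟨d, m, hd, hm, hdm⟩ :=
    exists_mul_eq_card_modEq_one (p := 5) K (by simp) (by omega) (by omega)
  have hd20 : d ∣ 20 := by simpa using hd
  have : d ≤ 20 := Nat.le_of_dvd (by norm_num) hd20
  unfold Nat.ModEq at hm
  interval_cases d <;> omega

end Equiv.Perm

/-- If `S₆` acts transitively on a finite nonempty set `Ω` with `|Ω| ≤ 16`,
then `|Ω| ∈ {1, 2, 6, 12, 10, 15}`. -/
theorem S6_transitive_action_card (Ω : Type) [Fintype Ω] [Nonempty Ω]
    [MulAction (Equiv.Perm (Fin 6)) Ω]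
    [MulAction.IsPretransitive (Equiv.Perm (Fin 6)) Ω]
    (hcard : Fintype.card Ω ≤ 16) :
    Fintype.card Ω ∈ ({1, 2, 6, 12, 10, 15} : Set ℕ) := by
  obtain ⟨x⟩ := ‹Nonempty Ω›
  set H := stabilizer (Perm (Fin 6)) x
  set A := alternatingGroup (Fin 6)
  have hH : H.index = Fintype.card Ω := by
    rw [index_stabilizer_of_transitive, Nat.card_eq_fintype_card]
  have hS6 : Nat.card (Perm (Fin 6)) = 720 := by
    rw [Nat.card_perm, Nat.card_eq_fintype_card, Fintype.card_fin]; rfl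
  have hpos : 0 < H.index := Nat.pos_of_ne_zero index_ne_zero_of_finite
  have h720 : H.index ∣ 720 := hS6 ▸ H.index_dvd_card
  have hsmall : H.index < 6 → H.index ≤ 2 := fun h ↦
    index_le_two_of_index_lt_card (by simp) (by simpa using h)
  -- Index 9 survives the Sylow test in `H` itself (`80 = 5 * 16`), but not in `A ⊓ H`.
  have hAH : (A ⊓ H).index = A.relIndex H * H.index := by
    rw [← inf_relIndex_right, relIndex_mul_index inf_le_right]
  have hA : A.relIndex H ∣ 2 :=
    alternatingGroup.index_eq_two (α := Fin 6) ▸ relIndex_dvd_index_of_normal _ _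
  have h2 : 2 ∣ (A ⊓ H).index :=
    alternatingGroup.index_eq_two (α := Fin 6) ▸ index_dvd_of_le inf_le_left
  have h720' : (A ⊓ H).index ∣ 720 := hS6 ▸ (A ⊓ H).index_dvd_card
  have hne := index_subgroup_fin_six_notMem (A ⊓ H)
  rw [hAH] at h2 h720' hne
  rw [hH] at *
  simp only [Set.mem_insert_iff, Set.mem_singleton_iff] at hne ⊢
  rcases (Nat.dvd_prime Nat.prime_two).1 hA with hr | hr <;> rw [hr] at h2 h720' hne <;>
    interval_cases Fintype.card Ω <;> omega
end

section
/- The symmetric group S₇ contains no subgroup of index 12 and no subgroup of index 15. -/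
/-!
Index 15 is prime to 2 and to 7, so `H` contains a Sylow 2-subgroup of `S₇`, hence a conjugate of a
transposition, and `7 ∣ |H|`, hence a 7-cycle; a transposition and a `p`-cycle generate `S_p`.

For index 12, `|H| = 420 = 7 · 60`. The centralizer of a 7-cycle in `S₇` is the group it generates
and `N/C` embeds in `Aut C₇ ≅ C₆`, so a Sylow 7-subgroup `P` of `H` has `|N_H(P)| ∣ 42`. The number
`420 / |N_H(P)|` of Sylow 7-subgroups of `H` is then a multiple of 10 dividing 420, and none of these
is `≡ 1 (mod 7)`.
-/

open Equiv Subgroup Nat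

section
variable {G : Type*} [Group G]

theorem Subgroup.card_normalizer_dvd_card_mulAut_mul_card_centralizer (H : Subgroup G) :
    Nat.card (normalizer (H : Set G)) ∣
      Nat.card (MulAut H) * Nat.card (centralizer (H : Set G)) := by
  have hNC := card_dvd_of_injective _ (QuotientGroup.kerLift_injective H.normalizerMonoidHom)
  rw [normalizerMonoidHom_ker, ← index, ← relIndex] at hNC
  have hcard : Nat.card (centralizer (H : Set G)) *
      (centralizer (H : Set G)).relIndex (normalizer (H : Set G)) =
        Nat.card (normalizer (H : Set G)) := by
    rw [← relIndex_bot_left, ← relIndex_bot_left,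
      relIndex_mul_relIndex _ _ _ bot_le (centralizer_le_normalizer _)]
  rw [← hcard, mul_comm]
  exact mul_dvd_mul_right hNC _

theorem Subgroup.card_normalizer_dvd_card_normalizer_map_subtype (H : Subgroup G)
    (P : Subgroup H) :
    Nat.card (normalizer (P : Set H)) ∣
      Nat.card (normalizer ((P.map H.subtype : Subgroup G) : Set G)) := by
  rw [← card_map_of_injective H.subtype_injective]
  exact card_dvd_of_le (le_normalizer_map _)

theorem Sylow.card_eq_of_card_eq_prime_mul [Finite G] {p m : ℕ} [Fact p.Prime] (P : Sylow p G)
    (hG : Nat.card G = p * m) (hm : ¬ p ∣ m) : Nat.card P = p := by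
  have hp : p.Prime := Fact.out
  rw [P.card_eq_multiplicity, hG, Nat.factorization_mul hp.ne_zero (by rintro rfl; simp at hm),
    Finsupp.add_apply, hp.factorization_self, Nat.factorization_eq_zero_of_not_dvd hm, pow_one]

theorem Subgroup.exists_sylow_le_of_not_dvd_index [Finite G] {p : ℕ} [Fact p.Prime]
    {H : Subgroup G} (hH : ¬ p ∣ H.index) : ∃ P : Sylow p G, (P : Subgroup G) ≤ H := by
  obtain ⟨P⟩ : Nonempty (Sylow p H) := inferInstance
  have hP : ¬ p ∣ (P.map H.subtype).index := by
    rw [index_map_subtype]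
    exact Nat.Prime.not_dvd_mul Fact.out P.not_dvd_index hH
  exact ⟨(P.2.map H.subtype).toSylow hP, map_subtype_le _⟩

theorem Subgroup.exists_conj_mem_of_not_dvd_index [Finite G] {p n : ℕ} [Fact p.Prime]
    {H : Subgroup G} (hH : ¬ p ∣ H.index) {g : G} (hg : orderOf g = p ^ n) :
    ∃ c : G, c * g * c⁻¹ ∈ H := by
  obtain ⟨P, hPH⟩ := exists_sylow_le_of_not_dvd_index hH
  have hg' : IsPGroup p (zpowers g) := IsPGroup.of_card (by rw [Nat.card_zpowers, hg])
  obtain ⟨S, hgS⟩ := hg'.exists_le_sylow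
  obtain ⟨c, rfl⟩ := MulAction.exists_smul_eq G S P
  refine ⟨c, hPH ?_⟩
  rw [Sylow.coe_subgroup_smul]
  exact smul_mem_pointwise_smul g (MulAut.conj c) _ (hgS (mem_zpowers g))

end

namespace Equiv.Perm
variable {α : Type*} [Fintype α] [DecidableEq α]

theorem nat_card_centralizer_of_orderOf_eq_card (hp : (Fintype.card α).Prime) {σ : Perm α}
    (hσ : orderOf σ = Fintype.card α) : Nat.card (centralizer {σ}) = Fintype.card α := by
  have hσ' : σ.IsCycle := isCycle_of_prime_order'' hp hσ
  have hsupp : σ.support.card = Fintype.card α := hσ'.orderOf ▸ hσ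
  rw [nat_card_centralizer, hσ'.cycleType, hsupp]
  simp

theorem card_normalizer_dvd_of_card_eq (hp : (Fintype.card α).Prime) {P : Subgroup (Perm α)}
    (hP : Nat.card P = Fintype.card α) :
    Nat.card (normalizer (P : Set (Perm α))) ∣ (Fintype.card α - 1) * Fintype.card α := by
  have : Fact (Fintype.card α).Prime := ⟨hp⟩
  have : IsCyclic P := isCyclic_of_prime_card hP
  obtain ⟨σ, hσ⟩ := exists_prime_orderOf_dvd_card' (G := P) (Fintype.card α) hP.symm.dvd
  have hC : Nat.card (centralizer (P : Set (Perm α))) ∣ Fintype.card α := by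
    rw [← nat_card_centralizer_of_orderOf_eq_card hp ((orderOf_coe σ).trans hσ)]
    exact card_dvd_of_le (centralizer_le (by simp))
  have hAut : Nat.card (MulAut P) = Fintype.card α - 1 := by
    rw [IsCyclic.card_mulAut, hP, Nat.totient_prime hp]
  exact (card_normalizer_dvd_card_mulAut_mul_card_centralizer P).trans
    (hAut ▸ mul_dvd_mul_left _ hC)

theorem subgroup_eq_top_of_not_dvd_index (hp : (Fintype.card α).Prime) {H : Subgroup (Perm α)}
    (h2 : ¬ 2 ∣ H.index) (hpH : ¬ Fintype.card α ∣ H.index) : H = ⊤ := by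
  classical
  have : Fact (2 : ℕ).Prime := ⟨Nat.prime_two⟩
  obtain ⟨a, b, hab⟩ := Fintype.exists_pair_of_one_lt_card hp.one_lt
  obtain ⟨c, hc⟩ := exists_conj_mem_of_not_dvd_index h2
    ((IsSwap.orderOf ⟨a, b, hab, rfl⟩).trans (pow_one 2).symm)
  refine subgroup_eq_top_of_swap_mem hp ?_ hc ?_
  · have hcard : Fintype.card H * H.index = (Fintype.card α)! := by
      rw [← Nat.card_eq_fintype_card, ← Nat.card_eq_fintype_card, ← Nat.card_perm, card_mul_index]
    exact (hp.dvd_mul.mp (hcard ▸ Nat.dvd_factorial hp.pos le_rfl)).resolve_right hpH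
  · exact ⟨c a, c b, c.injective.ne hab, (swap_apply_apply c a b).symm⟩

end Equiv.Perm

theorem perm_fin_seven_index_ne_twelve (H : Subgroup (Perm (Fin 7))) : H.index ≠ 12 := by
  intro h12
  have : Fact (Nat.Prime 7) := ⟨by norm_num⟩
  have hH : Nat.card H = 7 * 60 := by
    have hcard := H.index_mul_card
    rw [h12, Nat.card_perm, Nat.card_fin] at hcard
    simp only [factorial] at hcard
    omega
  obtain ⟨P⟩ : Nonempty (Sylow 7 H) := inferInstance
  have hP : Nat.card (P.map H.subtype) = Fintype.card (Fin 7) := by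
    rw [card_map_of_injective H.subtype_injective, P.card_eq_of_card_eq_prime_mul hH (by norm_num),
      Fintype.card_fin]
  have hN : Nat.card (normalizer (P : Set H)) ∣ 42 :=
    (card_normalizer_dvd_card_normalizer_map_subtype H P).trans
      (Perm.card_normalizer_dvd_of_card_eq (by norm_num) hP)
  have hmod : Nat.card (Sylow 7 H) % 7 = 1 := card_sylow_modEq_one 7 H
  have hcount : Nat.card (Sylow 7 H) * Nat.card (normalizer (P : Set H)) = 420 := by
    rw [P.card_eq_index_normalizer, index_mul_card, hH]
  have hN_le := Nat.le_of_dvd (by norm_num) hN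
  interval_cases Nat.card (normalizer (P : Set H)) <;> omega

/-- `S₇` contains no subgroup of index 12 and no subgroup of index 15. -/
theorem S7_no_subgroup_index_12_or_15 (H : Subgroup (Equiv.Perm (Fin 7))) :
    H.index ≠ 12 ∧ H.index ≠ 15 := by
  refine ⟨perm_fin_seven_index_ne_twelve H, fun h15 => ?_⟩
  have hH : H = ⊤ := Perm.subgroup_eq_top_of_not_dvd_index (by norm_num) (by omega) (by simp [h15])
  simp [hH] at h15
end

section
/- Every subgroup of S₆ of index 6 is isomorphic to S₅. -/
/-!
`S₆` acts on the six cosets of `H`. The kernel of this action is a normal subgroup contained in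
`H`; every nontrivial normal subgroup of `S₆` contains `A₆`, which has index 2, so the kernel is
trivial. Comparing orders, `S₆` is then all of `Perm (S₆ ⧸ H) ≅ S₆`, and `H` is carried onto the
stabilizer of the coset `H`, which is the symmetric group on the remaining five cosets.
-/

open Equiv MulAction

namespace Equiv.Perm

variable {α : Type*} [DecidableEq α]

theorem range_ofSubtype_ne_eq_stabilizer (a : α) :
    (ofSubtype : Perm {b // b ≠ a} →* Perm α).range = stabilizer (Perm α) a := by
  ext σ
  rw [mem_stabilizer_iff, Perm.smul_def]
  constructor
  · rintro ⟨τ, rfl⟩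
    exact ofSubtype_apply_of_not_mem τ (not_not.mpr rfl)
  · intro hσ
    exact ⟨σ.subtypePerm fun _ => σ.injective.ne_iff' hσ,
      ofSubtype_subtypePerm _ fun x hx hxa => hx (hxa ▸ hσ)⟩

noncomputable def stabilizerMulEquivPermCompl (a : α) :
    stabilizer (Perm α) a ≃* Perm {b // b ≠ a} :=
  (MulEquiv.subgroupCongr (range_ofSubtype_ne_eq_stabilizer a)).symm.trans
    (MonoidHom.ofInjective ofSubtype_injective).symm

theorem normalCore_eq_bot_of_two_lt_index [Fintype α] (hα : 5 ≤ Nat.card α)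
    {H : Subgroup (Perm α)} (hH : 2 < H.index) : H.normalCore = ⊥ := by
  by_contra hne
  have : Nontrivial α := Finite.one_lt_card_iff_nontrivial.mp (by omega)
  have hA : alternatingGroup α ≤ H :=
    (alternatingGroup_le_of_normal hα (Subgroup.nontrivial_iff_ne_bot _ |>.mpr hne)).trans
      H.normalCore_le
  have hdvd : H.index ∣ 2 := alternatingGroup.index_eq_two (α := α) ▸ Subgroup.index_dvd_of_le hA
  have := Nat.le_of_dvd two_pos hdvd
  omega

end Equiv.Perm

theorem MulAction.map_stabilizer_of_surjective_toPermHom {G X : Type*} [Group G] [MulAction G X]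
    (h : Function.Surjective (toPermHom G X)) (x : X) :
    (stabilizer G x).map (toPermHom G X) = stabilizer (Perm X) x := by
  ext σ
  constructor
  · rintro ⟨g, hg, rfl⟩
    exact hg
  · intro hσ
    obtain ⟨g, rfl⟩ := h σ
    exact ⟨g, hσ, rfl⟩

noncomputable def Subgroup.mulEquivStabilizerOfBijective {G : Type*} [Group G] (H : Subgroup G)
    (h : Function.Bijective (toPermHom G (G ⧸ H))) :
    H ≃* stabilizer (Perm (G ⧸ H)) ((1 : G) : G ⧸ H) :=
  (MulEquiv.subgroupCongr (stabilizer_quotient H).symm).trans <|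
    ((MulEquiv.ofBijective _ h).subgroupMap _).trans <|
      MulEquiv.subgroupCongr (map_stabilizer_of_surjective_toPermHom h.2 _)

/-- Every subgroup of `S₆` of index 6 is isomorphic to `S₅`. -/
theorem S6_subgroup_index_6_iso_S5 (H : Subgroup (Equiv.Perm (Fin 6)))
    (hH : H.index = 6) :
    Nonempty (H ≃* Equiv.Perm (Fin 5)) := by
  classical
  set X := Perm (Fin 6) ⧸ H
  have hX : Nat.card X = 6 := H.index_eq_card ▸ hH
  have hinj : Function.Injective (toPermHom (Perm (Fin 6)) X) := by
    rw [← MonoidHom.ker_eq_bot_iff, ← Subgroup.normalCore_eq_ker]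
    exact Perm.normalCore_eq_bot_of_two_lt_index (by simp) (by omega)
  have hbij := hinj.bijective_of_nat_card_le <| by
    rw [Nat.card_perm, Nat.card_perm, hX, Nat.card_fin]
  have hcompl : Nat.card {b : X // b ≠ ((1 : Perm (Fin 6)) : X)} = 5 := by
    have := Fintype.ofFinite X
    rw [Nat.card_eq_fintype_card, Fintype.card_subtype_compl, Fintype.card_subtype_eq,
      ← Nat.card_eq_fintype_card, hX]
  exact ⟨(H.mulEquivStabilizerOfBijective hbij).trans <|
    (Perm.stabilizerMulEquivPermCompl _).trans (Finite.equivFinOfCardEq hcompl).permCongrHom⟩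
end

section
/- Neither S₇ nor its double cover 2.S₇ admits a faithful complex representation of dimension 4; consequently S₇ does not embed into PGL₄(ℂ). -/
/-- `PGL₄(ℂ) = GL₄(ℂ)/center`. -/
abbrev ProjectiveGeneralLinearGroup4C : Type :=
  GL (Fin 4) ℂ ⧸ Subgroup.center (GL (Fin 4) ℂ)

/-!
The image of the 7-cycle `σ` in `PGL₄(ℂ)` lifts to a matrix `A` with `A ^ 7 = 1`, and since
`σ` is conjugate to `σ ^ 3` in `S₇`, `A` is conjugate to a scalar multiple `μ • A ^ 3`.
Let `N j` be the multiplicity of the eigenvalue `ζ ^ j` of `A` (the rank of a spectral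
projector). Writing `μ = ζ ^ t`, the conjugation gives `N (3 * j + t) = N j`. As `3` generates
`(ZMod 7)ˣ`, the affine map `j ↦ 3 * j + t` fixes one residue and permutes the other six
cyclically, so `∑ N j = 4 < 6` forces all eigenvalues of `A` to coincide: `A` is scalar and
`σ` dies in `PGL₄(ℂ)`. For a linear representation of `S₇`, or of a double cover (in which `σ`
lifts to an element of order 7 with the same relation, the kernel having order prime to 7),
the image of `σ` is then central, which would force `σ ^ 3 = σ`.
-/

open Finset

section PowZMod

variable {M : Type*} [Monoid M] {n : ℕ} {x : M}

theorem pow_zmod_val_add [NeZero n] (hx : x ^ n = 1) (a b : ZMod n) :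
    x ^ (a + b).val = x ^ a.val * x ^ b.val := by
  rw [ZMod.val_add, ← pow_eq_pow_mod _ hx, pow_add]

theorem pow_zmod_val_natCast (hx : x ^ n = 1) (m : ℕ) : x ^ (m : ZMod n).val = x ^ m := by
  rw [ZMod.val_natCast, ← pow_eq_pow_mod _ hx]

theorem pow_zmod_val_mul (hx : x ^ n = 1) (a b : ZMod n) :
    x ^ (a * b).val = (x ^ a.val) ^ b.val := by
  rw [ZMod.val_mul, ← pow_eq_pow_mod _ hx, pow_mul]

end PowZMod

section SpectralProjector

variable {K R : Type*} [Field K] [Ring R] [Algebra K R] {n : ℕ} [NeZero n]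
  (ψ : AddChar (ZMod n) K) (A : R)

/-- For `A ^ n = 1`, the projection onto the `ψ j`-eigenspace of `A` (discrete Fourier
inversion). -/
noncomputable def spectralProjector (j : ZMod n) : R :=
  (n : K)⁻¹ • ∑ k : ZMod n, ψ (-(j * k)) • A ^ k.val

theorem sum_spectralProjector [NeZero (n : K)] (hψ : ψ.IsPrimitive) :
    ∑ j, spectralProjector ψ A j = 1 := by
  simp_rw [spectralProjector, ← smul_sum]
  rw [sum_comm]
  simp_rw [← sum_smul, neg_mul_eq_mul_neg]
  simp_rw [AddChar.sum_mulShift _ hψ, neg_eq_zero, Nat.cast_ite, Nat.cast_zero, ite_smul,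
    zero_smul, sum_ite_eq', mem_univ, if_true, ZMod.val_zero, pow_zero, ZMod.card, smul_smul,
    inv_mul_cancel₀ (NeZero.ne (n : K)), one_smul]

variable {A}

theorem mul_spectralProjector (hA : A ^ n = 1) (j : ZMod n) :
    A * spectralProjector ψ A j = ψ j • spectralProjector ψ A j := by
  have hshift (k : ZMod n) : A * (ψ (-(j * k)) • A ^ k.val) =
      ψ j • (ψ (-(j * (k + 1))) • A ^ (k + 1).val) := by
    have hchar : ψ (-(j * k)) = ψ j * ψ (-(j * (k + 1))) := by
      rw [← AddChar.map_add_eq_mul]; ring_nf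
    have hApow : A * A ^ k.val = A ^ (k + 1).val := by
      rw [pow_zmod_val_add hA, ← Nat.cast_one, pow_zmod_val_natCast hA, pow_one, pow_mul_comm']
    rw [mul_smul_comm, hApow, hchar, smul_smul]
  rw [spectralProjector, mul_smul_comm, mul_sum, smul_comm]
  simp_rw [hshift, ← smul_sum]
  congr 2
  exact Equiv.sum_comp (Equiv.addRight 1) (fun k => ψ (-(j * k)) • A ^ k.val)

theorem pow_mul_spectralProjector (hA : A ^ n = 1) (j : ZMod n) (m : ℕ) :
    A ^ m * spectralProjector ψ A j = ψ j ^ m • spectralProjector ψ A j := by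
  induction m with
  | zero => simp
  | succ m ih => rw [pow_succ', mul_assoc, ih, mul_smul_comm, mul_spectralProjector ψ hA,
      smul_smul, pow_succ]

theorem spectralProjector_mul_self [NeZero (n : K)] (hA : A ^ n = 1) (j : ZMod n) :
    spectralProjector ψ A j * spectralProjector ψ A j = spectralProjector ψ A j := by
  conv_lhs => enter [1]; rw [spectralProjector]
  simp_rw [smul_mul_assoc, sum_mul, smul_mul_assoc, pow_mul_spectralProjector ψ hA, smul_smul]
  have hcancel (k : ZMod n) : ψ (-(j * k)) * ψ j ^ k.val = 1 := by
    rw [← AddChar.map_nsmul_eq_pow, ← AddChar.map_add_eq_mul, nsmul_eq_mul,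
      ZMod.natCast_zmod_val, mul_comm k j, neg_add_cancel, AddChar.map_zero_eq_one]
  simp_rw [hcancel, one_smul, sum_const, card_univ, ZMod.card, ← Nat.cast_smul_eq_nsmul K,
    smul_smul, inv_mul_cancel₀ (NeZero.ne (n : K)), one_smul]

theorem units_conj_spectralProjector (U : Rˣ) (j : ZMod n) :
    U * spectralProjector ψ A j * ↑U⁻¹ = spectralProjector ψ (U * A * ↑U⁻¹) j := by
  simp_rw [spectralProjector, mul_smul_comm, smul_mul_assoc, mul_sum, sum_mul, mul_smul_comm,
    smul_mul_assoc, Units.conj_pow]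

theorem spectralProjector_smul_pow (hA : A ^ n = 1) (t : ZMod n) (r : (ZMod n)ˣ)
    (j : ZMod n) :
    spectralProjector ψ (ψ t • A ^ (r : ZMod n).val) (r * j + t) = spectralProjector ψ A j := by
  have hterm (k : ZMod n) : ψ (-((r * j + t) * k)) • (ψ t • A ^ (r : ZMod n).val) ^ k.val =
      ψ (-(j * (r * k))) • A ^ (r * k : ZMod n).val := by
    rw [smul_pow, smul_smul, ← AddChar.map_nsmul_eq_pow, ← AddChar.map_add_eq_mul,
      ← pow_zmod_val_mul hA, nsmul_eq_mul, ZMod.natCast_zmod_val]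
    ring_nf
  simp_rw [spectralProjector, hterm]
  congr 1
  exact Equiv.sum_comp (Units.mulLeft r) (fun k => ψ (-(j * k)) • A ^ k.val)

end SpectralProjector

namespace ZMod

variable {p : ℕ} [Fact p.Prime]

theorem ne_zero_of_orderOf_eq {a : ZMod p} (ha : orderOf a = p - 1) : a ≠ 0 := by
  rintro rfl
  rw [orderOf_zero] at ha
  have := (Fact.out : p.Prime).two_le
  omega

theorem exists_pow_eq_of_orderOf_eq {a : ZMod p} (ha : orderOf a = p - 1) {w : ZMod p}
    (hw : w ≠ 0) : ∃ k : ℕ, a ^ k = w := by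
  have ha0 := ne_zero_of_orderOf_eq ha
  have htop : Subgroup.zpowers (Units.mk0 a ha0) = ⊤ := by
    refine Subgroup.eq_top_of_card_eq _ ?_
    rw [Nat.card_zpowers, ← orderOf_units, Units.val_mk0, ha, Nat.card_eq_fintype_card,
      ZMod.card_units]
  obtain ⟨k, hk⟩ := mem_powers_iff_mem_zpowers.mpr (htop ▸ Subgroup.mem_top (Units.mk0 w hw))
  exact ⟨k, by simpa [Units.ext_iff] using hk⟩

theorem exists_forall_ne_eq_zero_of_affine_invariant {a b : ZMod p} (ha : orderOf a = p - 1)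
    {N : ZMod p → ℕ} (hN : ∀ j, N (a * j + b) = N j) (hsum : ∑ j, N j < p - 1) :
    ∃ q, ∀ j ≠ q, N j = 0 := by
  obtain rfl | ha1 := eq_or_ne a 1
  · rw [orderOf_one] at ha
    rw [← ha, Nat.lt_one_iff, sum_eq_zero_iff] at hsum
    exact ⟨0, fun j _ => hsum j (mem_univ j)⟩
  obtain ⟨q, hfix⟩ : ∃ q, a * q + b = q :=
    ⟨b / (1 - a), by field_simp [sub_ne_zero.mpr ha1.symm]; ring⟩
  have horbit (y : ZMod p) (k : ℕ) : N (q + a ^ k * y) = N (q + y) := by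
    induction k with
    | zero => simp
    | succ k ih =>
      rw [pow_succ', mul_assoc, ← ih, ← hN (q + a ^ k * y)]
      congr 1
      linear_combination -hfix
  refine ⟨q, fun j hj => ?_⟩
  have hconst (j' : ZMod p) (hj' : j' ≠ q) : N j' = N j := by
    obtain ⟨k, hk⟩ := exists_pow_eq_of_orderOf_eq ha
      (div_ne_zero (sub_ne_zero.mpr hj') (sub_ne_zero.mpr hj))
    have := horbit (j - q) k
    rwa [hk, div_mul_cancel₀ _ (sub_ne_zero.mpr hj), add_sub_cancel, add_sub_cancel] at this
  by_contra hNj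
  have : p - 1 ≤ ∑ j, N j := calc
    p - 1 ≤ (univ.erase q).card * N j := by
      rw [card_erase_of_mem (mem_univ q), card_univ, ZMod.card]
      exact Nat.le_mul_of_pos_right _ (Nat.pos_of_ne_zero hNj)
    _ = ∑ j' ∈ univ.erase q, N j' := by
      rw [sum_congr rfl fun j' hj' => hconst j' (ne_of_mem_erase hj'), sum_const, smul_eq_mul]
    _ ≤ ∑ j', N j' := sum_le_sum_of_subset (erase_subset q univ)
  omega

end ZMod

namespace Matrix

variable {K ι : Type*} [Field K] [Fintype ι] [DecidableEq ι]

theorem eq_zero_of_rank_eq_zero {m : Type*} {P : Matrix m ι K} (h : P.rank = 0) : P = 0 := by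
  rw [rank, Submodule.finrank_eq_zero, LinearMap.range_eq_bot] at h
  exact Matrix.toLin'.injective (by rw [map_zero, toLin'_apply', h])

theorem IsIdempotentElem.trace_eq_rank {P : Matrix ι ι K} (hP : IsIdempotentElem P) :
    P.trace = P.rank := by
  have hL : IsIdempotentElem (toLin' P) := hP.map toLinAlgEquiv'
  rw [← trace_toLin'_eq, (LinearMap.IsIdempotentElem.isProj_range _ hL).trace, rank,
    toLin'_apply']

section SpectralProjector

variable {n : ℕ} [NeZero n] (ψ : AddChar (ZMod n) K) {A : Matrix ι ι K}

theorem sum_rank_spectralProjector [NeZero (n : K)] [CharZero K] (hψ : ψ.IsPrimitive)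
    (hA : A ^ n = 1) :
    ∑ j, (spectralProjector ψ A j).rank = Fintype.card ι := by
  have h := congrArg trace (sum_spectralProjector ψ A hψ)
  rw [trace_sum, trace_one, sum_congr rfl fun j _ =>
    IsIdempotentElem.trace_eq_rank (spectralProjector_mul_self ψ hA j)] at h
  exact_mod_cast h

theorem rank_spectralProjector_units_mul_add (hA : A ^ n = 1) (C : (Matrix ι ι K)ˣ)
    {t : ZMod n} {u : (ZMod n)ˣ}
    (hC : (C : Matrix ι ι K) * A * (↑C⁻¹ : Matrix ι ι K) = ψ t • A ^ (u : ZMod n).val)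
    (j : ZMod n) : (spectralProjector ψ A (u * j + t)).rank = (spectralProjector ψ A j).rank := by
  have hdet (U : (Matrix ι ι K)ˣ) : IsUnit (U : Matrix ι ι K).det :=
    (isUnit_iff_isUnit_det _).mp U.isUnit
  rw [← spectralProjector_smul_pow ψ hA t u j, ← hC, ← units_conj_spectralProjector,
    rank_mul_eq_left_of_isUnit_det _ _ (hdet _), rank_mul_eq_right_of_isUnit_det _ _ (hdet _)]

theorem eq_smul_one_of_rank_spectralProjector_eq_zero [NeZero (n : K)] (hψ : ψ.IsPrimitive)
    (hA : A ^ n = 1) {q : ZMod n} (hq : ∀ j ≠ q, (spectralProjector ψ A j).rank = 0) :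
    A = ψ q • 1 := by
  have hPq : spectralProjector ψ A q = 1 := by
    rw [← sum_spectralProjector ψ A hψ,
      Fintype.sum_eq_single q fun j hj => eq_zero_of_rank_eq_zero (hq j hj)]
  calc A = A * spectralProjector ψ A q := by rw [hPq, mul_one]
    _ = ψ q • spectralProjector ψ A q := mul_spectralProjector ψ hA q
    _ = ψ q • 1 := by rw [hPq]

end SpectralProjector

theorem exists_eq_smul_one_of_conj_eq_smul_pow {p r : ℕ} [Fact p.Prime] [CharZero K]
    [HasEnoughRootsOfUnity K p] (hr : orderOf (r : ZMod p) = p - 1)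
    (hι : Fintype.card ι < p - 1) {A : Matrix ι ι K} (hA : A ^ p = 1) (C : (Matrix ι ι K)ˣ)
    {μ : K} (hC : (C : Matrix ι ι K) * A * (↑C⁻¹ : Matrix ι ι K) = μ • A ^ r) :
    ∃ c : K, A = c • 1 := by
  rcases isEmpty_or_nonempty ι with _ | _
  · exact ⟨0, Subsingleton.elim _ _⟩
  have : NeZero p := ⟨(Fact.out : p.Prime).ne_zero⟩
  obtain ⟨ζ, hζ⟩ := HasEnoughRootsOfUnity.exists_primitiveRoot K p
  have hψ := AddChar.zmodChar_primitive_of_primitive_root p hζ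
  have hμ : μ ^ p = 1 := by
    have h := Units.conj_pow C A p
    rw [hC, hA, smul_pow, ← pow_mul, mul_comm, pow_mul, hA, one_pow, mul_one, Units.mul_inv] at h
    exact smul_left_injective K one_ne_zero (by simpa using h)
  obtain ⟨i, -, hi⟩ := hζ.eq_pow_of_pow_eq_one hμ
  have hr0 := ZMod.ne_zero_of_orderOf_eq hr
  have hC' : (C : Matrix ι ι K) * A * (↑C⁻¹ : Matrix ι ι K) =
      AddChar.zmodChar p hζ.pow_eq_one i • A ^ (Units.mk0 _ hr0 : ZMod p).val := by
    rw [hC, Units.val_mk0, pow_zmod_val_natCast hA, AddChar.zmodChar_apply', hi]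
  obtain ⟨q, hq⟩ := ZMod.exists_forall_ne_eq_zero_of_affine_invariant hr
    (rank_spectralProjector_units_mul_add _ hA C hC') (sum_rank_spectralProjector _ hψ hA ▸ hι)
  exact ⟨_, eq_smul_one_of_rank_spectralProjector_eq_zero _ hψ hA hq⟩

theorem exists_eq_smul_one_of_pow_eq_smul_one_of_conj_eq_smul_pow {p r : ℕ} [Fact p.Prime]
    [IsAlgClosed K] [CharZero K] (hr : orderOf (r : ZMod p) = p - 1)
    (hι : Fintype.card ι < p - 1) {A : Matrix ι ι K} {z : Kˣ} (hA : A ^ p = (z : K) • 1)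
    (C : (Matrix ι ι K)ˣ) {μ : K}
    (hC : (C : Matrix ι ι K) * A * (↑C⁻¹ : Matrix ι ι K) = μ • A ^ r) : ∃ c : K, A = c • 1 := by
  have hp := (Fact.out : p.Prime).pos
  have : NeZero (p : K) := ⟨Nat.cast_ne_zero.mpr hp.ne'⟩
  obtain ⟨t, ht⟩ := IsAlgClosed.exists_pow_nat_eq (z⁻¹ : K) hp
  have ht0 : t ≠ 0 := by
    rintro rfl
    rw [zero_pow hp.ne', eq_comm, inv_eq_zero] at ht
    exact z.ne_zero ht
  obtain ⟨c, hc⟩ := exists_eq_smul_one_of_conj_eq_smul_pow hr hι (A := t • A)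
    (by rw [smul_pow, hA, ht, smul_smul, inv_mul_cancel₀ z.ne_zero, one_smul]) C
    (μ := t * μ * (t ^ r)⁻¹) (by
      rw [mul_smul_comm, smul_mul_assoc, hC, smul_pow, smul_smul, smul_smul,
        inv_mul_cancel_right₀ (pow_ne_zero r ht0)])
  exact ⟨t⁻¹ * c, by rw [← smul_smul, ← hc, smul_smul, inv_mul_cancel₀ ht0, one_smul]⟩

end Matrix

namespace Matrix.GeneralLinearGroup

variable {K ι G : Type*} [Field K] [Fintype ι] [DecidableEq ι] [Group G]

theorem exists_val_eq_smul_one_of_mem_center {g : GL ι K}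
    (hg : g ∈ Subgroup.center (GL ι K)) : ∃ z : Kˣ, (g : Matrix ι ι K) = (z : K) • 1 := by
  obtain ⟨z, rfl⟩ := center_eq_range_scalar (n := ι) (R := K) ▸ hg
  exact ⟨z, by rw [smul_one_eq_diagonal]; rfl⟩

theorem mem_center_of_val_eq_smul_one {g : GL ι K} {c : K} (hg : (g : Matrix ι ι K) = c • 1) :
    g ∈ Subgroup.center (GL ι K) :=
  mem_center_iff_val_mem_range_scalar.mpr ⟨c, by rw [hg, scalar_apply, smul_one_eq_diagonal]⟩

theorem map_eq_one_of_conj_eq_pow {p r : ℕ} [Fact p.Prime] [IsAlgClosed K] [CharZero K]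
    (hr : orderOf (r : ZMod p) = p - 1) (hι : Fintype.card ι < p - 1)
    (f : G →* GL ι K ⧸ Subgroup.center (GL ι K)) {s c : G} (hs : s ^ p = 1)
    (hc : c * s * c⁻¹ = s ^ r) : f s = 1 := by
  obtain ⟨B, hB⟩ := QuotientGroup.mk_surjective (f s)
  obtain ⟨C, hC⟩ := QuotientGroup.mk_surjective (f c)
  obtain ⟨z, hz⟩ := exists_val_eq_smul_one_of_mem_center <|
    (QuotientGroup.eq_one_iff (B ^ p)).mp
      (by rw [QuotientGroup.mk_pow, hB, ← map_pow, hs, map_one])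
  have hrel : ((B ^ r : GL ι K) : GL ι K ⧸ Subgroup.center (GL ι K)) = ↑(C * B * C⁻¹) := by
    simp only [QuotientGroup.mk_mul, QuotientGroup.mk_inv, QuotientGroup.mk_pow, hB, hC,
      ← map_pow, ← map_mul, ← map_inv, hc]
  obtain ⟨w, hw⟩ := exists_val_eq_smul_one_of_mem_center (QuotientGroup.eq.mp hrel)
  have hconj : (C : Matrix ι ι K) * B * (↑C⁻¹ : Matrix ι ι K) =
      (w : K) • (B : Matrix ι ι K) ^ r := calc
    _ = ↑(B ^ r * ((B ^ r)⁻¹ * (C * B * C⁻¹))) := by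
      rw [mul_inv_cancel_left, Units.val_mul, Units.val_mul]
    _ = (w : K) • (B : Matrix ι ι K) ^ r := by
      rw [Units.val_mul, hw, mul_smul_comm, mul_one, Units.val_pow_eq_pow_val]
  obtain ⟨e, he⟩ := Matrix.exists_eq_smul_one_of_pow_eq_smul_one_of_conj_eq_smul_pow hr hι
    (by rw [← Units.val_pow_eq_pow_val, hz]) C hconj
  rw [← hB, QuotientGroup.eq_one_iff]
  exact mem_center_of_val_eq_smul_one he

theorem pow_eq_self_of_conj_eq_pow {p r : ℕ} [Fact p.Prime] [IsAlgClosed K] [CharZero K]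
    (hr : orderOf (r : ZMod p) = p - 1) (hι : Fintype.card ι < p - 1)
    (ρ : G →* GL ι K) (hρ : Function.Injective ρ) {s c : G} (hs : s ^ p = 1)
    (hc : c * s * c⁻¹ = s ^ r) : s ^ r = s := by
  have hcent : ρ s ∈ Subgroup.center (GL ι K) := (QuotientGroup.eq_one_iff _).mp
    (map_eq_one_of_conj_eq_pow hr hι ((QuotientGroup.mk' _).comp ρ) hs hc)
  rw [← hc]
  apply hρ
  rw [map_mul, map_mul, map_inv, Subgroup.mem_center_iff.mp hcent, mul_inv_cancel_right]

end Matrix.GeneralLinearGroup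

namespace MonoidHom

variable {E G : Type*} [Group E] [Group G] (π : E →* G) {n : ℕ}

theorem exists_lift_pow_eq_one (hcop : (Nat.card π.ker).Coprime n) {x : E} (hx : π x ^ n = 1) :
    ∃ y, π y = π x ∧ y ^ n = 1 := by
  obtain ⟨m, hm⟩ := exists_pow_eq_self_of_coprime
    (hcop.coprime_dvd_right (orderOf_dvd_of_pow_eq_one hx))
  have hxn : x ^ n ∈ π.ker := by rw [mem_ker, map_pow, hx]
  refine ⟨(x ^ Nat.card π.ker) ^ m, by rw [map_pow, map_pow, hm], ?_⟩
  have hk : (x ^ n) ^ Nat.card π.ker = 1 := by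
    simpa [Subtype.ext_iff] using pow_card_eq_one' (x := (⟨x ^ n, hxn⟩ : π.ker))
  rw [← pow_mul, ← pow_mul, show Nat.card π.ker * (m * n) = n * Nat.card π.ker * m by ring,
    pow_mul, pow_mul, hk, one_pow]

theorem conj_eq_pow_of_map_conj_eq_pow (hcent : π.ker ≤ Subgroup.center E)
    (hcop : (Nat.card π.ker).Coprime n) {y g : E} (hy : y ^ n = 1) {r : ℕ}
    (h : π (g * y * g⁻¹) = π (y ^ r)) : g * y * g⁻¹ = y ^ r := by
  set ε := (y ^ r)⁻¹ * (g * y * g⁻¹)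
  have hε : ε ∈ π.ker := by rw [mem_ker, map_mul, map_inv, h, inv_mul_cancel]
  have hconj : g * y * g⁻¹ = y ^ r * ε := (mul_inv_cancel_left _ _).symm
  have hcomm : Commute (y ^ r) ε := Subgroup.mem_center_iff.mp (hcent hε) (y ^ r)
  have hεn : ε ^ n = 1 := calc
    ε ^ n = (y ^ r) ^ n * ε ^ n := by rw [← pow_mul, mul_comm, pow_mul, hy, one_pow, one_mul]
    _ = (g * y * g⁻¹) ^ n := by rw [hconj, hcomm.mul_pow]
    _ = 1 := by rw [conj_pow, hy, mul_one, mul_inv_cancel]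
  have hεk : ε ^ Nat.card π.ker = 1 := by
    simpa [Subtype.ext_iff] using pow_card_eq_one' (x := (⟨ε, hε⟩ : π.ker))
  have hε1 : ε = 1 := by
    rw [← pow_one ε, ← hcop, pow_gcd_eq_one]; exact ⟨hεk, hεn⟩
  rw [hconj, hε1, mul_one]

end MonoidHom

def finMulThree : Equiv.Perm (Fin 7) := ⟨(3 * ·), (5 * ·), by decide, by decide⟩

/-- Neither `S₇` nor any double cover `2.S₇` (a central extension of `S₇` by `ℤ/2`)
admits a faithful 4-dimensional complex representation; consequently `S₇` does not
embed into `PGL₄(ℂ)`. -/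
theorem S7_and_double_cover_no_faithful_4dim_rep :
    (∀ ρ : Equiv.Perm (Fin 7) →* GL (Fin 4) ℂ, ¬ Function.Injective ρ) ∧
    (∀ (E : Type) (_ : Group E) (π : E →* Equiv.Perm (Fin 7)),
      Function.Surjective π → Nat.card π.ker = 2 →
      (π.ker : Subgroup E) ≤ Subgroup.center E →
      ∀ ρ : E →* GL (Fin 4) ℂ, ¬ Function.Injective ρ) ∧
    (∀ f : Equiv.Perm (Fin 7) →* ProjectiveGeneralLinearGroup4C,
      ¬ Function.Injective f) := by
  have hσ : finRotate 7 ^ 7 = 1 := by decide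
  have hτ : finMulThree * finRotate 7 * finMulThree⁻¹ = finRotate 7 ^ 3 := by decide
  have hσ3 : finRotate 7 ^ 3 ≠ finRotate 7 := by decide
  have h3 : orderOf ((3 : ℕ) : ZMod 7) = 7 - 1 := by rw [orderOf_eq_iff (by norm_num)]; decide
  have : Fact (Nat.Prime 7) := ⟨by norm_num⟩
  have hdim : Fintype.card (Fin 4) < 7 - 1 := by decide
  have hlin {G : Type} [Group G] (ρ : G →* GL (Fin 4) ℂ) (hρ : Function.Injective ρ) {s c : G}
      (hs : s ^ 7 = 1) (hc : c * s * c⁻¹ = s ^ 3) : s ^ 3 = s :=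
    Matrix.GeneralLinearGroup.pow_eq_self_of_conj_eq_pow h3 hdim ρ hρ hs hc
  refine ⟨fun ρ hρ => hσ3 (hlin ρ hρ hσ hτ), ?_, fun f hf => ?_⟩
  · intro E _ π hπ hcard hcent ρ hρ
    have hcop : (Nat.card π.ker).Coprime 7 := by rw [hcard]; norm_num
    obtain ⟨s₀, hs₀⟩ := hπ (finRotate 7)
    obtain ⟨c, hc⟩ := hπ finMulThree
    obtain ⟨s, hs, hs7⟩ := π.exists_lift_pow_eq_one hcop (x := s₀) (by rw [hs₀, hσ])
    have hconj : c * s * c⁻¹ = s ^ 3 := π.conj_eq_pow_of_map_conj_eq_pow hcent hcop hs7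
      (by rw [map_mul, map_mul, map_inv, map_pow, hs, hs₀, hc, hτ])
    apply hσ3
    rw [← hs₀, ← hs, ← map_pow, hlin ρ hρ hs7 hconj]
  · have hσ1 : finRotate 7 = 1 :=
      hf (by rw [Matrix.GeneralLinearGroup.map_eq_one_of_conj_eq_pow h3 hdim f hσ hτ, map_one])
    exact hσ3 (by rw [hσ1, one_pow])
end
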